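/- For a typed solos term P satisfying (AC1), (AC2), (AC3) which reduces to Q by interaction of dual solos s₀ and t₀: if the reduction introduces an object occurrence of a name x into some residue in Q, then x has no R-occurrence in Q. -/
import Mathlib


/-- Communication protocols carried by object occurrences: Send and Receive. -/
inductive Proto : Type
  | S : Proto
  | R : Proto
deriving DecidableEq

/-- A (protocol-decorated) triadic solo: a polarity (`inp = true` for input),
a subject name and three object names each decorated with a protocol. -/
structure Solo where
  inp : Bool
  subj : ℕ
  objs : Fin 3 → ℕ × Proto
deriving DecidableEq

/-- A solos term in canonical form: a finite set of restricted (bound) names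
together with a multiset of solos in parallel. -/
structure CTerm where
  bound : Finset ℕ
  solos : Multiset Solo

/-- `x` has an object occurrence in `s`. -/
def Solo.objOcc (s : Solo) (x : ℕ) : Prop := ∃ i, (s.objs i).1 = x

/-- `x` has an `R`-occurrence in `s` (written `s ◁ x`). -/
def Solo.hasR (s : Solo) (x : ℕ) : Prop := ∃ i, s.objs i = (x, Proto.R)

/-- `x` has an `S`-occurrence in `s`. -/
def Solo.hasS (s : Solo) (x : ℕ) : Prop := ∃ i, s.objs i = (x, Proto.S)

/-- `s ◁ t` : the subject of `t` has an `R`-occurrence in `s`. -/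
def Solo.ltS (s t : Solo) : Prop := s.hasR t.subj

/-- Dual solos: same subject, opposite polarities. -/
def Dual (s t : Solo) : Prop := s.subj = t.subj ∧ s.inp ≠ t.inp

/-- `s` is a root of `P`: no solo `t` of `P` satisfies `t ◁ s`. -/
def CTerm.IsRoot (P : CTerm) (s : Solo) : Prop := ∀ t ∈ P.solos, ¬ t.ltS s

/-- The relation `◁` restricted to the solos of `P`. -/
def CTerm.lt (P : CTerm) (s t : Solo) : Prop :=
  s ∈ P.solos ∧ t ∈ P.solos ∧ s.ltS t

/-- The number of `R`-occurrences of the name `x` in `P`. -/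
def CTerm.Rocc (P : CTerm) (x : ℕ) : ℕ :=
  (P.solos.map
    (fun s => (Finset.univ.filter (fun i => s.objs i = (x, Proto.R))).card)).sum

/-- (AC1): each name has at most one `R`-occurrence. -/
def AC1 (P : CTerm) : Prop := ∀ x : ℕ, P.Rocc x ≤ 1

/-- (AC2): two dual solos are both roots. -/
def AC2 (P : CTerm) : Prop :=
  ∀ s ∈ P.solos, ∀ t ∈ P.solos, Dual s t → P.IsRoot s ∧ P.IsRoot t

/-- (AC3): `s ◁ x` and `x` occurring as object in `t` implies `s ◁* t`. -/
def AC3 (P : CTerm) : Prop :=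
  ∀ s ∈ P.solos, ∀ t ∈ P.solos, ∀ x : ℕ,
    s.hasR x → t.objOcc x → Relation.ReflTransGen P.lt s t

/-- (AC4): a solo with both an `S`- and an `R`-occurrence of a name is an input. -/
def AC4 (P : CTerm) : Prop :=
  ∀ s ∈ P.solos, ∀ x : ℕ, s.hasS x → s.hasR x → s.inp = true

/-- (AC5): no free name has an `R`-occurrence. -/
def AC5 (P : CTerm) : Prop :=
  ∀ x : ℕ, x ∉ P.bound → ∀ s ∈ P.solos, ¬ s.hasR x

/-- Acyclic solos terms: conditions (AC1)–(AC5). -/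
def Acyclic (P : CTerm) : Prop := AC1 P ∧ AC2 P ∧ AC3 P ∧ AC4 P ∧ AC5 P

/-- Applying a name substitution to a solo (protocols are preserved). -/
def applySub (σ : ℕ → ℕ) (s : Solo) : Solo :=
  ⟨s.inp, σ s.subj, fun i => (σ (s.objs i).1, (s.objs i).2)⟩

/-- `MguData σ s0 t0 P` : `σ` is a most general unifier of the objects of the
dual solos `s0` and `t0`, modifying only bound names of `P`. -/
def MguData (σ : ℕ → ℕ) (s0 t0 : Solo) (P : CTerm) : Prop :=
  (∀ i, σ (s0.objs i).1 = σ (t0.objs i).1) ∧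
  (∀ w, σ w ≠ w → w ∈ P.bound) ∧
  (∀ w, σ (σ w) = σ w) ∧
  (∀ τ : ℕ → ℕ, (∀ i, τ (s0.objs i).1 = τ (t0.objs i).1) → ∀ w, τ (σ w) = τ w)

/-- One reduction step of the solos calculus in canonical form: two dual solos
`s0` and `t0` of `P` are erased and a most general unifier of their objects,
modifying only bound names, is applied to the remaining solos (the residues). -/
def Reduces (P Q : CTerm) : Prop :=
  ∃ (s0 t0 : Solo) (σ : ℕ → ℕ),
    s0 ∈ P.solos ∧ t0 ∈ P.solos.erase s0 ∧ Dual s0 t0 ∧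
    MguData σ s0 t0 P ∧
    Q.solos = ((P.solos.erase s0).erase t0).map (applySub σ) ∧
    Q.bound = P.bound.filter (fun w => σ w = w)


lemma occ_of_merge (σ : ℕ → ℕ) (s0 t0 : Solo) (P : CTerm)
    (hmgu : MguData σ s0 t0 P) (z y : ℕ) (hy : y ≠ z) (hσ : σ y = σ z) :
    s0.objOcc z ∨ t0.objOcc z := by
  by_contra h
  push_neg at h
  obtain ⟨hs, ht⟩ := h
  simp only [Solo.objOcc, not_exists] at hs ht
  set τ : ℕ → ℕ := Function.update σ z (σ z + 1) with hτ
  have hτu : ∀ i, τ (s0.objs i).1 = τ (t0.objs i).1 := by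
    intro i
    rw [hτ, Function.update_of_ne (hs i), Function.update_of_ne (ht i)]
    exact hmgu.1 i
  have hmg := hmgu.2.2.2 τ hτu
  by_cases hzz : σ z = z
  · have h0 := hmg y
    rw [hσ, hzz] at h0
    have l : τ z = z + 1 := by simp [hτ, hzz]
    have r : τ y = z := by rw [hτ, Function.update_of_ne hy, hσ, hzz]
    omega
  · have h0 := hmg z
    have l : τ (σ z) = σ z := by rw [hτ, Function.update_of_ne hzz]; exact hmgu.2.2.1 z
    have r : τ z = σ z + 1 := by simp [hτ]
    omega

lemma two_le_rocc (P : CTerm) (r : Solo) (z : ℕ) (hr : r.hasR z)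
    (hc : 2 ≤ P.solos.count r) : 2 ≤ P.Rocc z := by
  obtain ⟨w, hw⟩ := Multiset.le_iff_exists_add.mp (Multiset.le_count_iff_replicate_le.mp hc)
  obtain ⟨i, hi⟩ := hr
  have hf : 1 ≤ (Finset.univ.filter (fun j => r.objs j = (z, Proto.R))).card :=
    Finset.card_pos.mpr ⟨i, Finset.mem_filter.mpr ⟨Finset.mem_univ i, hi⟩⟩
  unfold CTerm.Rocc
  rw [hw, Multiset.map_add, Multiset.sum_add, Multiset.map_replicate, Multiset.sum_replicate,
    smul_eq_mul]
  omega

/-- Under (AC1)–(AC3), if a reduction step between the dual solos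
`s0` and `t0` introduces an object occurrence of the name `x` into some residue
(i.e. some remaining solo has an object occurrence of a name `y ≠ x` with
`σ y = x`), then `x` has no `R`-occurrence in the reduct `Q`. -/
theorem stmt11 (P Q : CTerm) (h1 : AC1 P) (h2 : AC2 P) (h3 : AC3 P)
    (s0 t0 : Solo) (σ : ℕ → ℕ)
    (hs0 : s0 ∈ P.solos) (ht0 : t0 ∈ P.solos.erase s0) (hdual : Dual s0 t0)
    (hmgu : MguData σ s0 t0 P)
    (hQ : Q.solos = ((P.solos.erase s0).erase t0).map (applySub σ))
    (hQb : Q.bound = P.bound.filter (fun w => σ w = w))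
    (x : ℕ)
    (hintro : ∃ t ∈ (P.solos.erase s0).erase t0,
      ∃ y : ℕ, y ≠ x ∧ σ y = x ∧ t.objOcc y) :
    ∀ t' ∈ Q.solos, ¬ t'.hasR x := by
  obtain ⟨t, htmem, y, hyx, hσy, -⟩ := hintro
  intro t' ht' hR
  rw [hQ] at ht'
  obtain ⟨u, hu, rfl⟩ := Multiset.mem_map.mp ht'
  obtain ⟨i, hi⟩ := hR
  simp only [applySub] at hi
  have hσz : σ (u.objs i).1 = x := congrArg Prod.fst hi
  have hRz : (u.objs i).2 = Proto.R := congrArg Prod.snd hi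
  set z := (u.objs i).1 with hz
  have huerase : u ∈ P.solos.erase s0 := Multiset.mem_of_mem_erase hu
  have huP : u ∈ P.solos := Multiset.mem_of_mem_erase huerase
  have ht0P : t0 ∈ P.solos := Multiset.mem_of_mem_erase ht0
  have huR : u.hasR z := ⟨i, Prod.ext hz.symm hRz⟩
  have hne : s0 ≠ t0 := fun h => hdual.2 (by rw [h])
  have hyz : ∃ y', y' ≠ z ∧ σ y' = σ z := by
    by_cases hzx : z = x
    · exact ⟨y, by rw [hzx]; exact hyx, by rw [hσy, hσz]⟩
    · refine ⟨x, fun h => hzx h.symm, ?_⟩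
      rw [← hσz, hmgu.2.2.1]
  obtain ⟨y', hy'z, hσe⟩ := hyz
  have hroots := h2 s0 hs0 t0 ht0P hdual
  obtain hocc | hocc := occ_of_merge σ s0 t0 P hmgu z y' hy'z hσe
  · have hreach := h3 u huP s0 hs0 z huR hocc
    rcases hreach.cases_tail with heq | ⟨c, -, hc⟩
    · -- s0 = u : duplicate copy, contradicts AC1
      have hcount : 2 ≤ P.solos.count s0 := by
        have h1' : 1 ≤ (P.solos.erase s0).count s0 := by
          rw [Multiset.one_le_count_iff_mem]; rw [← heq] at huerase; exact huerase
        rw [Multiset.count_erase_self] at h1'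
        omega
      have := two_le_rocc P s0 z (by rw [heq]; exact huR) hcount
      have := h1 z
      omega
    · exact (hroots.1 c hc.1) hc.2.2
  · have hreach := h3 u huP t0 ht0P z huR hocc
    rcases hreach.cases_tail with heq | ⟨c, -, hc⟩
    · have hcount : 2 ≤ P.solos.count t0 := by
        have h1' : 1 ≤ ((P.solos.erase s0).erase t0).count t0 := by
          rw [Multiset.one_le_count_iff_mem]; rw [← heq] at hu; exact hu
        rw [Multiset.count_erase_self, Multiset.count_erase_of_ne (fun h => hne h.symm)] at h1'
        omega
      have := two_le_rocc P t0 z (by rw [heq]; exact huR) hcount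
      have := h1 z
      omega
    · exact (hroots.2 c hc.1) hc.2.2
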